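/- arXiv:1509.03654 — 5 statements merged into one kernel-verified Lean document; each statement's English description precedes it below -/
import Mathlib

section
/- Let 1 < p < ∞ and 1/p + 1/q = 1. Let u = (u_k) and v = (v_k) be real sequences with all terms nonzero such that Σ_{k=0}^∞ |u_k| < ∞ and Σ_{i=0}^∞ |v_i|^q < ∞. Then every sequence (X_k) of fuzzy numbers with Σ_{k=0}^∞ d(X_k, 0̄)^p < ∞ belongs to bv^F(u,v), i.e. Σ_{k=0}^∞ |Σ_{i=0}^k u_k v_i d(ΔX_i, 0̄)| < ∞. -/
open Finset Filter Topology

/-- A fuzzy number, represented (via the Representation Theorem) by the pair of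
functions `α ↦ X̲^(α)` and `α ↦ X̄^(α)` giving the endpoints of its α-cuts. -/
structure FuzzyNumber where
  lower : ℝ → ℝ
  upper : ℝ → ℝ
  lower_mono : MonotoneOn lower (Set.Icc 0 1)
  upper_anti : AntitoneOn upper (Set.Icc 0 1)
  lower_leftCont : ∀ a ∈ Set.Ioc (0:ℝ) 1, ContinuousWithinAt lower (Set.Iic a) a
  upper_leftCont : ∀ a ∈ Set.Ioc (0:ℝ) 1, ContinuousWithinAt upper (Set.Iic a) a
  lower_rightCont : ContinuousWithinAt lower (Set.Ici 0) 0
  upper_rightCont : ContinuousWithinAt upper (Set.Ici 0) 0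
  le_at_one : lower 1 ≤ upper 1

namespace FuzzyNumber

/-- The metric `d(X,Y) = sup_{α∈[0,1]} max(|X̲^(α)−Y̲^(α)|, |X̄^(α)−Ȳ^(α)|)`. -/
noncomputable def dist (X Y : FuzzyNumber) : ℝ :=
  ⨆ α : Set.Icc (0:ℝ) 1, max |X.lower α - Y.lower α| |X.upper α - Y.upper α|

/-- Levelwise addition. -/
def add (X Y : FuzzyNumber) : FuzzyNumber where
  lower := fun α => X.lower α + Y.lower α
  upper := fun α => X.upper α + Y.upper α
  lower_mono := X.lower_mono.add Y.lower_mono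
  upper_anti := X.upper_anti.add Y.upper_anti
  lower_leftCont := fun a ha => (X.lower_leftCont a ha).add (Y.lower_leftCont a ha)
  upper_leftCont := fun a ha => (X.upper_leftCont a ha).add (Y.upper_leftCont a ha)
  lower_rightCont := X.lower_rightCont.add Y.lower_rightCont
  upper_rightCont := X.upper_rightCont.add Y.upper_rightCont
  le_at_one := add_le_add X.le_at_one Y.le_at_one

/-- Levelwise negation: `(−Y)^(α) = [−Ȳ^(α), −Y̲^(α)]`. -/
def neg (X : FuzzyNumber) : FuzzyNumber where
  lower := fun α => -X.upper α
  upper := fun α => -X.lower α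
  lower_mono := X.upper_anti.neg
  upper_anti := X.lower_mono.neg
  lower_leftCont := fun a ha => (X.upper_leftCont a ha).neg
  upper_leftCont := fun a ha => (X.lower_leftCont a ha).neg
  lower_rightCont := X.upper_rightCont.neg
  upper_rightCont := X.lower_rightCont.neg
  le_at_one := neg_le_neg X.le_at_one

/-- `X − Y = X + (−Y)`. -/
def sub (X Y : FuzzyNumber) : FuzzyNumber := X.add Y.neg

/-- The crisp fuzzy number `r̄`. -/
def const (r : ℝ) : FuzzyNumber where
  lower := fun _ => r
  upper := fun _ => r
  lower_mono := monotoneOn_const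
  upper_anti := antitoneOn_const
  lower_leftCont := fun _ _ => continuousWithinAt_const
  upper_leftCont := fun _ _ => continuousWithinAt_const
  lower_rightCont := continuousWithinAt_const
  upper_rightCont := continuousWithinAt_const
  le_at_one := le_refl r

/-- The membership function `X(t) = sup{α ∈ [0,1] : X̲^(α) ≤ t ≤ X̄^(α)}`. -/
noncomputable def memFun (X : FuzzyNumber) (t : ℝ) : ℝ :=
  sSup {a : ℝ | a ∈ Set.Icc (0:ℝ) 1 ∧ X.lower a ≤ t ∧ t ≤ X.upper a}

/-- A fuzzy number `S` is symmetric if `S(t) = S(−t)` for all `t`. -/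
def IsSymmetric (S : FuzzyNumber) : Prop := ∀ t : ℝ, S.memFun t = S.memFun (-t)

/-- The difference sequence `ΔX_k = X_k − X_{k+1}`. -/
def delta (X : ℕ → FuzzyNumber) (k : ℕ) : FuzzyNumber := (X k).sub (X (k+1))

/-- Membership in `bv^F(u,v)`:
`Σ_{k=0}^∞ |Σ_{i=0}^k u_k v_i d(ΔX_i, 0̄)| < ∞`. -/
def MemBvF (u v : ℕ → ℝ) (X : ℕ → FuzzyNumber) : Prop :=
  Summable fun k => |∑ i ∈ Finset.range (k+1), u k * v i * dist (delta X i) (const 0)|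

end FuzzyNumber

section Aux
open FuzzyNumber

lemma FuzzyNumber.dist_zero_nonneg (X : FuzzyNumber) : 0 ≤ dist X (const 0) :=
  Real.iSup_nonneg fun _ => le_trans (abs_nonneg _) (le_max_left _ _)

lemma FuzzyNumber.le_dist_zero (X : FuzzyNumber) (α : Set.Icc (0:ℝ) 1) :
    max |X.lower α| |X.upper α| ≤ dist X (const 0) := by
  have h0 : (0:ℝ) ∈ Set.Icc (0:ℝ) 1 := by constructor <;> norm_num
  have h1 : (1:ℝ) ∈ Set.Icc (0:ℝ) 1 := by constructor <;> norm_num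
  have hbdd : BddAbove (Set.range fun α : Set.Icc (0:ℝ) 1 =>
      max |X.lower α - (const 0).lower α| |X.upper α - (const 0).upper α|) := by
    refine ⟨max (max |X.lower 0| |X.lower 1|) (max |X.upper 1| |X.upper 0|), ?_⟩
    rintro x ⟨β, rfl⟩
    simp only [const, sub_zero]
    apply max_le
    · exact le_max_of_le_left (abs_le_max_abs_abs
        (X.lower_mono h0 β.2 β.2.1) (X.lower_mono β.2 h1 β.2.2))
    · exact le_max_of_le_right (abs_le_max_abs_abs
        (X.upper_anti β.2 h1 β.2.2) (X.upper_anti h0 β.2 β.2.1))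
  have := le_ciSup hbdd α
  simpa only [const, sub_zero, dist] using this

lemma FuzzyNumber.dist_sub_zero_le (X Y : FuzzyNumber) :
    dist (X.sub Y) (const 0) ≤ dist X (const 0) + dist Y (const 0) := by
  apply Real.iSup_le _ (add_nonneg X.dist_zero_nonneg Y.dist_zero_nonneg)
  intro α
  simp only [sub, add, neg, const, sub_zero]
  have hx := X.le_dist_zero α
  have hy := Y.le_dist_zero α
  apply max_le
  · calc |X.lower α + -Y.upper α| ≤ |X.lower α| + |Y.upper α| := by
          simpa using abs_add_le (X.lower α) (-Y.upper α)
    _ ≤ dist X (const 0) + dist Y (const 0) :=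
      add_le_add (le_trans (le_max_left _ _) hx) (le_trans (le_max_right _ _) hy)
  · calc |X.upper α + -Y.lower α| ≤ |X.upper α| + |Y.lower α| := by
          simpa using abs_add_le (X.upper α) (-Y.lower α)
    _ ≤ dist X (const 0) + dist Y (const 0) :=
      add_le_add (le_trans (le_max_right _ _) hx) (le_trans (le_max_left _ _) hy)

lemma aux_rpow_add_le (x y p : ℝ) (hx : 0 ≤ x) (hy : 0 ≤ y) (hp : 0 < p) :
    (x + y) ^ p ≤ 2 ^ p * (x ^ p + y ^ p) := by
  have h1 : x + y ≤ 2 * max x y := by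
    rcases le_total x y with h | h
    · simp [max_eq_right h]; linarith
    · simp [max_eq_left h]; linarith
  have hm : 0 ≤ max x y := le_max_of_le_left hx
  calc (x + y) ^ p ≤ (2 * max x y) ^ p :=
        Real.rpow_le_rpow (by linarith) h1 hp.le
    _ = 2 ^ p * (max x y) ^ p := Real.mul_rpow (by norm_num) hm
    _ ≤ 2 ^ p * (x ^ p + y ^ p) := by
        apply mul_le_mul_of_nonneg_left _ (Real.rpow_nonneg (by norm_num) p)
        rcases max_cases x y with ⟨h, _⟩ | ⟨h, _⟩ <;> rw [h]
        · linarith [Real.rpow_nonneg hy p]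
        · linarith [Real.rpow_nonneg hx p]

end Aux

open FuzzyNumber in
/-- if `1 < p`, `1/p + 1/q = 1`, `(u_k) ∈ ℓ¹`, `(|v_i|^q)` summable,
then every `(X_k)` with `Σ d(X_k,0̄)^p < ∞` belongs to `bv^F(u,v)`. -/
theorem lp_subset_bvF (p q : ℝ) (hp : 1 < p) (hpq : 1 / p + 1 / q = 1)
    (u v : ℕ → ℝ) (hu : ∀ k, u k ≠ 0) (hv : ∀ k, v k ≠ 0)
    (hu1 : Summable fun k => |u k|) (hvq : Summable fun i => |v i| ^ q)
    (X : ℕ → FuzzyNumber)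
    (hX : Summable fun k => dist (X k) (const 0) ^ p) :
    MemBvF u v X := by
  set f : ℕ → ℝ := fun i => dist (delta X i) (const 0) with hf
  have hfnn : ∀ i, 0 ≤ f i := fun i => FuzzyNumber.dist_zero_nonneg _
  have hfle : ∀ i, f i ≤ dist (X i) (const 0) + dist (X (i+1)) (const 0) :=
    fun i => FuzzyNumber.dist_sub_zero_le _ _
  have hann : ∀ i, 0 ≤ dist (X i) (const 0) := fun i => FuzzyNumber.dist_zero_nonneg _
  have hp0 : 0 < p := lt_trans one_pos hp
  -- summability of f^p
  have hX1 : Summable fun k => dist (X (k+1)) (const 0) ^ p :=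
    (summable_nat_add_iff 1).2 hX
  have hsum2 : Summable fun i =>
      2 ^ p * (dist (X i) (const 0) ^ p + dist (X (i+1)) (const 0) ^ p) :=
    (hX.add hX1).mul_left _
  have hfp : Summable fun i => f i ^ p := by
    apply hsum2.of_nonneg_of_le (fun i => Real.rpow_nonneg (hfnn i) p)
    intro i
    calc f i ^ p ≤ (dist (X i) (const 0) + dist (X (i+1)) (const 0)) ^ p :=
          Real.rpow_le_rpow (hfnn i) (hfle i) hp0.le
      _ ≤ 2 ^ p * (dist (X i) (const 0) ^ p + dist (X (i+1)) (const 0) ^ p) :=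
          aux_rpow_add_le _ _ p (hann i) (hann (i+1)) hp0
  -- Hölder
  have hconj : p.HolderConjugate q := Real.holderConjugate_iff.mpr ⟨hp, by simpa [one_div] using hpq⟩
  have hmul : Summable fun i => f i * |v i| :=
    (Real.summable_and_inner_le_Lp_mul_Lq_tsum_of_nonneg hconj hfnn (fun i => abs_nonneg _) hfp hvq).1
  set T : ℝ := ∑' i, f i * |v i| with hT
  have hbound : ∀ k, |∑ i ∈ Finset.range (k+1), u k * v i * f i| ≤ |u k| * T := by
    intro k
    calc |∑ i ∈ Finset.range (k+1), u k * v i * f i|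
        ≤ ∑ i ∈ Finset.range (k+1), |u k * v i * f i| :=
          Finset.abs_sum_le_sum_abs _ _
      _ = ∑ i ∈ Finset.range (k+1), |u k| * (f i * |v i|) := by
          apply Finset.sum_congr rfl
          intro i _
          rw [abs_mul, abs_mul, abs_of_nonneg (hfnn i)]
          ring
      _ = |u k| * ∑ i ∈ Finset.range (k+1), f i * |v i| := by
          rw [Finset.mul_sum]
      _ ≤ |u k| * T := by
          apply mul_le_mul_of_nonneg_left _ (abs_nonneg _)
          exact hmul.sum_le_tsum _ (fun i _ => mul_nonneg (hfnn i) (abs_nonneg _))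
  exact (hu1.mul_right T).of_nonneg_of_le (fun k => abs_nonneg _) hbound
end

section
/- There exist real sequences u = (u_k), v = (v_k) with all terms nonzero whose row sums u_k Σ_{i=0}^k v_i are absolutely summable, and a sequence (X_k) of fuzzy numbers such that (X_k) ∈ bv^F(u,v) but sup_k d(X_k, 0̄) = ∞. (For instance v_k = 1 for all k, u_k = 1/(k+1)^4, and X_k = k̄ for odd k, X_k = 0̄ for even k.) Hence the inclusion of the bounded fuzzy sequences into bv^F(u,v) is strict. -/
open Finset Filter Topology

/-!
Take `X_k = k̄`, `v_k = 1` and `u_k = 1/(k+1)³`. Every difference `ΔX_k` is the crisp number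
`−1̄`, at distance `1` from `0̄`, so the `k`-th term of the `bv^F(u,v)` series is the row sum
`u_k (k+1) = 1/(k+1)²`, which is summable, while `d(X_k, 0̄) = k` is unbounded.
-/

namespace FuzzyNumber

theorem dist_const_const (r s : ℝ) : dist (const r) (const s) = |r - s| := by
  simp only [dist, const, max_self, ciSup_const]

theorem sub_const_const (r s : ℝ) : (const r).sub (const s) = const (r - s) := by
  simp only [sub, add, neg, const, ← sub_eq_add_neg]

theorem delta_const_comp (f : ℕ → ℝ) (k : ℕ) :
    delta (fun n => const (f n)) k = const (f k - f (k + 1)) :=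
  sub_const_const _ _

theorem memBvF_iff_summable_rowSum {u v : ℕ → ℝ} {X : ℕ → FuzzyNumber}
    (hX : ∀ i, dist (delta X i) (const 0) = 1) :
    MemBvF u v X ↔ Summable fun k => |u k * ∑ i ∈ range (k + 1), v i| := by
  simp only [MemBvF, hX, mul_one, mul_sum]

end FuzzyNumber

theorem summable_inv_succ_pow_three_mul_card_range :
    Summable fun k : ℕ => |1 / ((k : ℝ) + 1) ^ 3 * ∑ _i ∈ range (k + 1), (1 : ℝ)| := by
  have hsq : Summable fun k : ℕ => 1 / ((k : ℝ) + 1) ^ 2 := by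
    simpa [Nat.cast_add] using
      (summable_nat_add_iff 1).mpr (Real.summable_one_div_nat_pow.mpr one_lt_two)
  refine hsq.congr fun k => ?_
  rw [sum_const, card_range, nsmul_one, Nat.cast_add_one, abs_of_nonneg (by positivity)]
  field_simp

open FuzzyNumber in
/-- the inclusion of the bounded sequences into `bv^F(u,v)` is strict:
there are `u`, `v` with absolutely summable row sums and an unbounded
sequence `(X_k)` of fuzzy numbers lying in `bv^F(u,v)`. -/
theorem linfty_subset_bvF_strict : ∃ (u v : ℕ → ℝ) (X : ℕ → FuzzyNumber),
    (∀ k, u k ≠ 0) ∧ (∀ k, v k ≠ 0) ∧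
    (Summable fun k => |u k * ∑ i ∈ Finset.range (k+1), v i|) ∧
    MemBvF u v X ∧
    ¬ BddAbove (Set.range fun k => dist (X k) (const 0)) := by
  have hdelta : ∀ i, dist (delta (fun n : ℕ => const n) i) (const 0) = 1 := fun i => by
    rw [delta_const_comp, dist_const_const]
    norm_num
  have hdist : ∀ k : ℕ, dist (const k) (const 0) = k := fun k => by
    rw [dist_const_const, sub_zero, Nat.abs_cast]
  refine ⟨fun k => 1 / ((k : ℝ) + 1) ^ 3, fun _ => 1, fun n => const n, fun k => by positivity,
    fun _ => one_ne_zero, summable_inv_succ_pow_three_mul_card_range,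
    (memBvF_iff_summable_rowSum hdelta).mpr summable_inv_succ_pow_three_mul_card_range, ?_⟩
  rintro ⟨M, hM⟩
  obtain ⟨k, hk⟩ := exists_nat_gt M
  have hle : dist (const k) (const 0) ≤ M := hM ⟨k, rfl⟩
  rw [hdist] at hle
  linarith
end

section
/- Let 1 < p < ∞ and 1/p + 1/q = 1. Let u = (u_k) and v = (v_k) be real sequences with all terms nonzero such that Σ_{k=0}^∞ |u_k| < ∞ and Σ_{i=0}^∞ |v_i|^q < ∞. Then every sequence (X_k) of fuzzy numbers with Σ_{k=0}^∞ d(ΔX_k, 0̄)^p < ∞ belongs to bv^F(u,v). -/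
open Finset Filter Topology

/-! Hölder's inequality puts `(v_i d(ΔX_i, 0̄))` in `ℓ¹`, so every inner sum is bounded by
its `ℓ¹` norm `C`, and the `k`-th term of the outer series is at most `C |u_k|`. -/

theorem FuzzyNumber.dist_nonneg (X Y : FuzzyNumber) : 0 ≤ dist X Y :=
  Real.iSup_nonneg fun _ => le_max_of_le_left (abs_nonneg _)

theorem summable_abs_mul_sum_range {u b : ℕ → ℝ} (hu : Summable fun k => |u k|)
    (hb : Summable fun i => |b i|) : Summable fun k => |u k * ∑ i ∈ range (k + 1), b i| := by
  refine (hu.mul_right (∑' i, |b i|)).of_nonneg_of_le (fun k => abs_nonneg _) fun k => ?_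
  rw [abs_mul]
  gcongr
  calc |∑ i ∈ range (k + 1), b i| ≤ ∑ i ∈ range (k + 1), |b i| := abs_sum_le_sum_abs _ _
    _ ≤ ∑' i, |b i| := hb.sum_le_tsum _ fun i _ => abs_nonneg _

open FuzzyNumber in
theorem lp_delta_subset_bvF_general (p q : ℝ) (hp : 1 < p) (hpq : 1 / p + 1 / q = 1)
    (u v : ℕ → ℝ)
    (hu1 : Summable fun k => |u k|) (hvq : Summable fun i => |v i| ^ q)
    (X : ℕ → FuzzyNumber)
    (hX : Summable fun k => dist (delta X k) (const 0) ^ p) :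
    MemBvF u v X := by
  have hconj : p.HolderConjugate q :=
    Real.holderConjugate_iff.2 ⟨hp, by simpa only [one_div] using hpq⟩
  have hvd : Summable fun i => |v i * dist (delta X i) (const 0)| := by
    simpa only [abs_mul, abs_abs, abs_of_nonneg (dist_nonneg _ _)] using
      Real.summable_mul_of_Lp_Lq_of_nonneg hconj.symm (fun i => abs_nonneg (v i))
        (fun i => dist_nonneg _ _) hvq hX
  simpa only [MemBvF, mul_assoc, ← mul_sum] using summable_abs_mul_sum_range hu1 hvd

open FuzzyNumber in
/-- if `1 < p`, `1/p + 1/q = 1`, `(u_k) ∈ ℓ¹`, `(|v_i|^q)` summable,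
then every `(X_k)` with `Σ d(ΔX_k,0̄)^p < ∞` belongs to `bv^F(u,v)`. -/
theorem lp_delta_subset_bvF (p q : ℝ) (hp : 1 < p) (hpq : 1 / p + 1 / q = 1)
    (u v : ℕ → ℝ) (hu : ∀ k, u k ≠ 0) (hv : ∀ k, v k ≠ 0)
    (hu1 : Summable fun k => |u k|) (hvq : Summable fun i => |v i| ^ q)
    (X : ℕ → FuzzyNumber)
    (hX : Summable fun k => dist (delta X k) (const 0) ^ p) :
    MemBvF u v X :=
  lp_delta_subset_bvF_general p q hp hpq u v hu1 hvq X hX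
end

section
/- There exist real sequences u = (u_k), v = (v_k) with all terms nonzero (for instance u_k = v_k = 1 for all k) and a sequence (X_k) of fuzzy numbers whose midpoint functions are identically zero, i.e. (X̲_k^(α) + X̄_k^(α))/2 = 0 for all k and all α ∈ [0,1] (so the midpoint sequence trivially satisfies the bv^F(u,v)-condition), while (X_k) ∉ bv^F(u,v). For instance the triangular fuzzy numbers X_k with α-cuts [−k(1−α), k(1−α)] satisfy d(ΔX_k, 0̄) = 2k+1 and Σ_{k=0}^∞ |Σ_{i=0}^k d(ΔX_i, 0̄)| = ∞. Hence membership of the midpoint sequence in bv^F(u,v) does not imply (X_k) ∈ bv^F(u,v). -/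
open Finset Filter Topology

open FuzzyNumber in
/-- The constant-interval fuzzy number with α-cuts `[-k, k]`. -/
def symInterval (k : ℕ) : FuzzyNumber where
  lower := fun _ => -(k : ℝ)
  upper := fun _ => (k : ℝ)
  lower_mono := monotoneOn_const
  upper_anti := antitoneOn_const
  lower_leftCont := fun _ _ => continuousWithinAt_const
  upper_leftCont := fun _ _ => continuousWithinAt_const
  lower_rightCont := continuousWithinAt_const
  upper_rightCont := continuousWithinAt_const
  le_at_one := neg_le_self (Nat.cast_nonneg k)

open FuzzyNumber in
/-- there are `u`, `v` (all terms nonzero) and a sequence `(X_k)` of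
fuzzy numbers whose midpoint functions are identically zero but `(X_k) ∉ bv^F(u,v)`. -/
theorem midpoint_mem_bvF_converse_fails : ∃ (u v : ℕ → ℝ) (X : ℕ → FuzzyNumber),
    (∀ k, u k ≠ 0) ∧ (∀ k, v k ≠ 0) ∧
    (∀ k, ∀ α ∈ Set.Icc (0:ℝ) 1, ((X k).lower α + (X k).upper α) / 2 = 0) ∧
    ¬ MemBvF u v X := by
  refine ⟨fun _ => 1, fun _ => 1, fun k => symInterval k, fun _ => one_ne_zero,
    fun _ => one_ne_zero, ?_, ?_⟩
  · intro k α hα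
    simp [symInterval]
  · intro h
    have hd : ∀ i : ℕ, FuzzyNumber.dist (delta (fun k => symInterval k) i) (const 0)
        = 2 * (i : ℝ) + 1 := by
      intro i
      haveI : Nonempty (Set.Icc (0:ℝ) 1) := ⟨⟨0, by norm_num⟩⟩
      have : ∀ α : Set.Icc (0:ℝ) 1,
          max |(delta (fun k => symInterval k) i).lower α - (const 0).lower α|
              |(delta (fun k => symInterval k) i).upper α - (const 0).upper α|
          = 2 * (i : ℝ) + 1 := by
        intro α
        simp only [delta, sub, add, neg, const, symInterval]
        push_cast
        rw [abs_of_nonpos (by linarith [Nat.cast_nonneg (α := ℝ) i]),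
            abs_of_nonneg (by linarith [Nat.cast_nonneg (α := ℝ) i])]
        ring_nf
        rw [max_self]
      unfold FuzzyNumber.dist
      simp only [this]
      exact ciSup_const
    have hge : ∀ k : ℕ, (1:ℝ) ≤
        |∑ i ∈ Finset.range (k+1), (1:ℝ) * 1 * FuzzyNumber.dist (delta (fun k => symInterval k) i) (const 0)| := by
      intro k
      have h1 : ∑ i ∈ Finset.range (k+1), (1:ℝ) * 1 * FuzzyNumber.dist (delta (fun k => symInterval k) i) (const 0)
          = ∑ i ∈ Finset.range (k+1), (2 * (i:ℝ) + 1) := by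
        refine Finset.sum_congr rfl fun i _ => ?_
        rw [hd i]; ring
      rw [h1, abs_of_nonneg (Finset.sum_nonneg fun i _ => by positivity)]
      calc (1:ℝ) = ∑ i ∈ Finset.range 1, (2*(i:ℝ)+1) := by simp
        _ ≤ _ := Finset.sum_le_sum_of_subset_of_nonneg
            (Finset.range_subset_range.2 (Nat.succ_le_succ (Nat.zero_le k)))
            (fun i _ _ => by positivity)
    have h0 := h.tendsto_atTop_zero
    have : ∀ᶠ k in atTop,
        |∑ i ∈ Finset.range (k+1), (1:ℝ) * 1 * FuzzyNumber.dist (delta (fun k => symInterval k) i) (const 0)| < 1 :=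
      h0.eventually (gt_mem_nhds one_pos)
    rcases this.exists with ⟨k, hk⟩
    exact absurd (hge k) (not_le.2 hk)
end

section
/- If X and Y are equivalent fuzzy numbers, i.e. there exist symmetric fuzzy numbers S₁, S₂ (S(t) = S(−t) for all t) with X + S₁ = Y + S₂, then X and Y have the same midpoint function: (X̲^(α) + X̄^(α))/2 = (Y̲^(α) + Ȳ^(α))/2 for every α ∈ [0,1]. -/
open Finset Filter Topology

/-!
For `0 < α ≤ 1` the α-cut `{t | α ≤ X(t)}` of the membership function is exactly the interval
`[X̲^(α), X̄^(α)]`: the inclusion `⊇` is immediate from the definition of `X(t)` as a supremum, and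
`⊆` follows from monotonicity of the endpoints together with their left continuity. If `S` is
symmetric, its cuts are therefore symmetric intervals, so `S̲^(α) + S̄^(α) = 0`, and by right
continuity also at `α = 0`. Comparing the endpoints of `X + S₁ = Y + S₂` then gives the claim.
-/

namespace FuzzyNumber

theorem lower_le_upper (X : FuzzyNumber) {a : ℝ} (ha : a ∈ Set.Icc (0 : ℝ) 1) :
    X.lower a ≤ X.upper a :=
  calc X.lower a ≤ X.lower 1 := X.lower_mono ha ⟨zero_le_one, le_rfl⟩ ha.2
    _ ≤ X.upper 1 := X.le_at_one
    _ ≤ X.upper a := X.upper_anti ha ⟨zero_le_one, le_rfl⟩ ha.2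

theorem le_memFun (X : FuzzyNumber) {a t : ℝ} (ha : a ∈ Set.Icc (0 : ℝ) 1)
    (ht : t ∈ Set.Icc (X.lower a) (X.upper a)) : a ≤ X.memFun t :=
  le_csSup ⟨1, fun _ hb => hb.1.2⟩ ⟨ha, ht⟩

theorem mem_Icc_of_lt_memFun (X : FuzzyNumber) {b t : ℝ} (hb : 0 ≤ b) (h : b < X.memFun t) :
    t ∈ Set.Icc (X.lower b) (X.upper b) := by
  have hne : {a : ℝ | a ∈ Set.Icc (0 : ℝ) 1 ∧ X.lower a ≤ t ∧ t ≤ X.upper a}.Nonempty := by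
    refine Set.nonempty_iff_ne_empty.2 fun hempty => ?_
    rw [memFun, hempty, Real.sSup_empty] at h
    exact h.not_ge hb
  obtain ⟨c, ⟨hc, hlc, hcu⟩, hbc⟩ := exists_lt_of_lt_csSup hne h
  have hb1 : b ∈ Set.Icc (0 : ℝ) 1 := ⟨hb, hbc.le.trans hc.2⟩
  exact ⟨(X.lower_mono hb1 hc hbc.le).trans hlc, hcu.trans (X.upper_anti hb1 hc hbc.le)⟩

theorem mem_Icc_of_le_memFun (X : FuzzyNumber) {a t : ℝ} (ha : a ∈ Set.Ioc (0 : ℝ) 1)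
    (h : a ≤ X.memFun t) : t ∈ Set.Icc (X.lower a) (X.upper a) := by
  have hcut : ∀ b ∈ Set.Ico (0 : ℝ) a, t ∈ Set.Icc (X.lower b) (X.upper b) :=
    fun b hb => X.mem_Icc_of_lt_memFun hb.1 (hb.2.trans_le h)
  have hcl : a ∈ closure (Set.Ico (0 : ℝ) a) := by
    rw [closure_Ico ha.1.ne]
    exact ⟨ha.1.le, le_rfl⟩
  have hsub : Set.Ico (0 : ℝ) a ⊆ Set.Iic a := fun _ hb => hb.2.le
  exact ⟨((X.lower_leftCont a ha).mono hsub).closure_le hcl continuousWithinAt_const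
      fun b hb => (hcut b hb).1,
    continuousWithinAt_const.closure_le hcl ((X.upper_leftCont a ha).mono hsub)
      fun b hb => (hcut b hb).2⟩

theorem le_memFun_iff (X : FuzzyNumber) {a t : ℝ} (ha : a ∈ Set.Ioc (0 : ℝ) 1) :
    a ≤ X.memFun t ↔ t ∈ Set.Icc (X.lower a) (X.upper a) :=
  ⟨X.mem_Icc_of_le_memFun ha, X.le_memFun ⟨ha.1.le, ha.2⟩⟩

theorem IsSymmetric.neg_mem_Icc {S : FuzzyNumber} (hS : S.IsSymmetric) {a t : ℝ}
    (ha : a ∈ Set.Ioc (0 : ℝ) 1) (ht : t ∈ Set.Icc (S.lower a) (S.upper a)) :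
    -t ∈ Set.Icc (S.lower a) (S.upper a) := by
  rw [← S.le_memFun_iff ha, ← hS]
  exact (S.le_memFun_iff ha).2 ht

theorem IsSymmetric.lower_add_upper_eq_zero_of_pos {S : FuzzyNumber} (hS : S.IsSymmetric)
    {a : ℝ} (ha : a ∈ Set.Ioc (0 : ℝ) 1) : S.lower a + S.upper a = 0 := by
  have hlu := S.lower_le_upper ⟨ha.1.le, ha.2⟩
  have hneg_upper := hS.neg_mem_Icc ha ⟨hlu, le_rfl⟩
  have hneg_lower := hS.neg_mem_Icc ha ⟨le_rfl, hlu⟩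
  linarith [hneg_upper.1, hneg_lower.2]

theorem IsSymmetric.lower_add_upper_eq_zero {S : FuzzyNumber} (hS : S.IsSymmetric) {a : ℝ}
    (ha : a ∈ Set.Icc (0 : ℝ) 1) : S.lower a + S.upper a = 0 := by
  rcases ha.1.eq_or_lt with rfl | hpos
  · have hcl : (0 : ℝ) ∈ closure (Set.Ioc (0 : ℝ) 1) := by
      rw [closure_Ioc zero_ne_one]
      exact ⟨le_rfl, zero_le_one⟩
    have hcont : ContinuousWithinAt (fun b => S.lower b + S.upper b) (Set.Ioc 0 1) 0 :=
      (S.lower_rightCont.add S.upper_rightCont).mono fun _ hb => hb.1.le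
    have hzero : ∀ b ∈ Set.Ioc (0 : ℝ) 1, S.lower b + S.upper b = 0 :=
      fun b hb => hS.lower_add_upper_eq_zero_of_pos hb
    exact le_antisymm
      (hcont.closure_le hcl continuousWithinAt_const fun b hb => (hzero b hb).le)
      (continuousWithinAt_const.closure_le hcl hcont fun b hb => (hzero b hb).ge)
  · exact hS.lower_add_upper_eq_zero_of_pos ⟨hpos, ha.2⟩

end FuzzyNumber

open FuzzyNumber in
/-- equivalent fuzzy numbers have the same midpoint function. -/
theorem equiv_same_midpoint (X Y S₁ S₂ : FuzzyNumber)
    (h₁ : S₁.IsSymmetric) (h₂ : S₂.IsSymmetric) (heq : X.add S₁ = Y.add S₂) :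
    ∀ α ∈ Set.Icc (0:ℝ) 1,
      (X.lower α + X.upper α) / 2 = (Y.lower α + Y.upper α) / 2 := by
  intro α hα
  have hlower : X.lower α + S₁.lower α = Y.lower α + S₂.lower α :=
    congrFun (congrArg FuzzyNumber.lower heq) α
  have hupper : X.upper α + S₁.upper α = Y.upper α + S₂.upper α :=
    congrFun (congrArg FuzzyNumber.upper heq) α
  linarith [h₁.lower_add_upper_eq_zero hα, h₂.lower_add_upper_eq_zero hα]
end
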